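/- Let X = a·M_{1⊗1} + M_{p⊗i} + M_{q⊗j} + M_{r⊗k} be a symmetric 4×4 real matrix, where a ∈ ℝ and p,q,r are pure quaternions (identified with vectors in ℝ³). Then X is symplectic if and only if a q = r × p, p·q = 0 = r·q, and a² − p·p + q·q − r·r = 1. If a ≠ 0, the conditions p·q = 0 = r·q follow from a q = r × p. -/

import Mathlib

open Matrix Quaternion

noncomputable def quatBasis : Module.Basis (Fin 4) ℝ (Quaternion ℝ) :=
  Module.Basis.ofEquivFun
    (QuaternionAlgebra.linearEquivTuple (c₁ := (-1 : ℝ)) (c₂ := (0 : ℝ)) (c₃ := (-1 : ℝ)))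

/-- The 4×4 real matrix of the ℝ-linear map `x ↦ p * x * star q` on ℍ ≅ ℝ⁴. -/
noncomputable def quatM (p q : Quaternion ℝ) : Matrix (Fin 4) (Fin 4) ℝ :=
  LinearMap.toMatrix quatBasis quatBasis
    ((LinearMap.mulLeft ℝ p).comp (LinearMap.mulRight ℝ (star q)))

def qi : Quaternion ℝ := ⟨0, 1, 0, 0⟩
def qj : Quaternion ℝ := ⟨0, 0, 1, 0⟩
def qk : Quaternion ℝ := ⟨0, 0, 0, 1⟩

/-- Dot product of the imaginary (vector) parts of two quaternions. -/
def qdot (x y : Quaternion ℝ) : ℝ := x.imI * y.imI + x.imJ * y.imJ + x.imK * y.imK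

/-- Cross product of the imaginary (vector) parts, as a pure quaternion. -/
def qcross (x y : Quaternion ℝ) : Quaternion ℝ :=
  ⟨0, x.imJ * y.imK - x.imK * y.imJ, x.imK * y.imI - x.imI * y.imK,
    x.imI * y.imJ - x.imJ * y.imI⟩

/-!
In the basis `1, i, j, k`, `J₄ = M_{1⊗j}` is the standard skew form and `X` is an explicit
symmetric matrix whose entries are linear in `a, p, q, r`. Since `J₄` is skew, so is `Xᵀ J₄ X`,
and its six entries above the diagonal are `2(u₁ ± p·q)`, `n ± 2u₂`, `2(u₃ ± r·q)`, where
`u = a q - r × p` and `n = a² - p·p + q·q - r·r`. Comparing with `J₄` gives exactly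
`u = 0`, `p·q = r·q = 0` and `n = 1`. For `a ≠ 0`, `a (p·q) = p·(r × p) = 0`, and likewise for `r`.
-/

lemma quatBasis_repr (x : Quaternion ℝ) :
    ⇑(quatBasis.repr x) = ![x.re, x.imI, x.imJ, x.imK] := by
  ext i; fin_cases i <;> rfl

lemma quatBasis_apply (j : Fin 4) : quatBasis j = ![1, qi, qj, qk] j := by
  rw [quatBasis]
  erw [Module.Basis.coe_ofEquivFun]
  fin_cases j <;> ext <;> simp [QuaternionAlgebra.linearEquivTuple, qi, qj, qk] <;> rfl

lemma quatM_apply (p q : Quaternion ℝ) (i j : Fin 4) :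
    quatM p q i j = quatBasis.repr (p * quatBasis j * star q) i := by
  rw [quatM, LinearMap.toMatrix_apply, LinearMap.comp_apply, LinearMap.mulRight_apply,
    LinearMap.mulLeft_apply, mul_assoc]

def skew4 (b₀₁ b₀₂ b₀₃ b₁₂ b₁₃ b₂₃ : ℝ) : Matrix (Fin 4) (Fin 4) ℝ :=
  !![0, b₀₁, b₀₂, b₀₃; -b₀₁, 0, b₁₂, b₁₃; -b₀₂, -b₁₂, 0, b₂₃; -b₀₃, -b₁₃, -b₂₃, 0]

lemma skew4_inj {b₀₁ b₀₂ b₀₃ b₁₂ b₁₃ b₂₃ c₀₁ c₀₂ c₀₃ c₁₂ c₁₃ c₂₃ : ℝ} :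
    skew4 b₀₁ b₀₂ b₀₃ b₁₂ b₁₃ b₂₃ = skew4 c₀₁ c₀₂ c₀₃ c₁₂ c₁₃ c₂₃ ↔
      b₀₁ = c₀₁ ∧ b₀₂ = c₀₂ ∧ b₀₃ = c₀₃ ∧ b₁₂ = c₁₂ ∧ b₁₃ = c₁₃ ∧ b₂₃ = c₂₃ := by
  refine ⟨fun h => ?_, fun h => by obtain ⟨rfl, rfl, rfl, rfl, rfl, rfl⟩ := h; rfl⟩
  have entry (i j : Fin 4) := congrFun (congrFun h i) j
  exact ⟨entry 0 1, entry 0 2, entry 0 3, entry 1 2, entry 1 3, entry 2 3⟩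

lemma quatM_one_qj : quatM 1 qj = skew4 0 1 0 0 1 0 := by
  ext i j
  rw [quatM_apply, quatBasis_repr, quatBasis_apply]
  fin_cases i <;> fin_cases j <;> simp [skew4] <;> simp [qi, qj, qk]

lemma quatM_pure_sum_eq (a : ℝ) {p q r : Quaternion ℝ} (hp : p.re = 0) (hq : q.re = 0)
    (hr : r.re = 0) :
    a • quatM 1 1 + quatM p qi + quatM q qj + quatM r qk =
      !![a + p.imI + q.imJ + r.imK, q.imK - r.imJ, r.imI - p.imK, p.imJ - q.imI;
        q.imK - r.imJ, a + p.imI - q.imJ - r.imK, p.imJ + q.imI, p.imK + r.imI;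
        r.imI - p.imK, p.imJ + q.imI, a - p.imI + q.imJ - r.imK, q.imK + r.imJ;
        p.imJ - q.imI, p.imK + r.imI, q.imK + r.imJ, a - p.imI - q.imJ + r.imK] := by
  ext i j
  simp only [Matrix.add_apply, Matrix.smul_apply, quatM_apply, quatBasis_repr, quatBasis_apply]
  fin_cases i <;> fin_cases j <;> simp [hp, hq, hr] <;> simp [qi, qj, qk] <;> ring

lemma Quaternion.eq_iff_im_sub_eq_zero {R : Type*} [CommRing R] {x y : ℍ[R]} (h : x.re = y.re) :
    x = y ↔ (x - y).imI = 0 ∧ (x - y).imJ = 0 ∧ (x - y).imK = 0 := by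
  simp only [Quaternion.ext_iff, Quaternion.imI_sub, Quaternion.imJ_sub, Quaternion.imK_sub,
    sub_eq_zero, h, true_and]

lemma qdot_smul_right (x y : Quaternion ℝ) (a : ℝ) : qdot x (a • y) = a * qdot x y := by
  simp only [qdot, Quaternion.imI_smul, Quaternion.imJ_smul, Quaternion.imK_smul, smul_eq_mul]
  ring

lemma qdot_qcross_self_left (x y : Quaternion ℝ) : qdot x (qcross x y) = 0 := by
  simp only [qdot, qcross]
  ring

lemma qdot_qcross_self_right (x y : Quaternion ℝ) : qdot y (qcross x y) = 0 := by
  simp only [qdot, qcross]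
  ring

lemma qdot_eq_zero_of_smul_eq {a : ℝ} (ha : a ≠ 0) {x y z : Quaternion ℝ} (h : a • y = z)
    (hz : qdot x z = 0) : qdot x y = 0 := by
  rw [← h, qdot_smul_right] at hz
  exact (mul_eq_zero.1 hz).resolve_left ha

lemma transpose_mul_quatM_one_qj_mul (a : ℝ) {p q r : Quaternion ℝ} (hp : p.re = 0)
    (hq : q.re = 0) (hr : r.re = 0) :
    (a • quatM 1 1 + quatM p qi + quatM q qj + quatM r qk)ᵀ * quatM 1 qj *
        (a • quatM 1 1 + quatM p qi + quatM q qj + quatM r qk) =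
      skew4 (2 * ((a • q - qcross r p).imI + qdot p q))
        (a ^ 2 - qdot p p + qdot q q - qdot r r + 2 * (a • q - qcross r p).imJ)
        (2 * ((a • q - qcross r p).imK + qdot r q))
        (2 * ((a • q - qcross r p).imK - qdot r q))
        (a ^ 2 - qdot p p + qdot q q - qdot r r - 2 * (a • q - qcross r p).imJ)
        (2 * ((a • q - qcross r p).imI - qdot p q)) := by
  rw [quatM_pure_sum_eq a hp hq hr, quatM_one_qj]
  simp only [Quaternion.imI_sub, Quaternion.imJ_sub, Quaternion.imK_sub, Quaternion.imI_smul,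
    Quaternion.imJ_smul, Quaternion.imK_smul, smul_eq_mul]
  simp only [qdot, qcross]
  ext i j
  fin_cases i <;> fin_cases j <;>
    simp [Matrix.mul_apply, Fin.sum_univ_four, skew4] <;> ring

theorem stmt_13 (a : ℝ) (p q r : Quaternion ℝ)
    (hp : p.re = 0) (hq : q.re = 0) (hr : r.re = 0)
    (X : Matrix (Fin 4) (Fin 4) ℝ)
    (hXdef : X = a • quatM 1 1 + quatM p qi + quatM q qj + quatM r qk) :
    (Xᵀ * quatM 1 qj * X = quatM 1 qj ↔
      a • q = qcross r p ∧ qdot p q = 0 ∧ qdot r q = 0 ∧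
        a ^ 2 - qdot p p + qdot q q - qdot r r = 1) ∧
    (a ≠ 0 → a • q = qcross r p → qdot p q = 0 ∧ qdot r q = 0) := by
  have hre : (a • q).re = (qcross r p).re := by simp [hq, qcross]
  refine ⟨?_, fun ha h =>
    ⟨qdot_eq_zero_of_smul_eq ha h (qdot_qcross_self_right r p),
      qdot_eq_zero_of_smul_eq ha h (qdot_qcross_self_left r p)⟩⟩
  rw [hXdef, transpose_mul_quatM_one_qj_mul a hp hq hr, quatM_one_qj, skew4_inj,
    Quaternion.eq_iff_im_sub_eq_zero hre]
  constructor
  · rintro ⟨h₀₁, h₀₂, h₀₃, h₁₂, h₁₃, h₂₃⟩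
    exact ⟨⟨by linarith, by linarith, by linarith⟩, by linarith, by linarith, by linarith⟩
  · rintro ⟨⟨hu₁, hu₂, hu₃⟩, hpq, hrq, hn⟩
    refine ⟨?_, ?_, ?_, ?_, ?_, ?_⟩ <;> linarith
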